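/- Let ε₀ > 0, Δt > 0, let a be a symmetric positive definite d×d real matrix with a ≽ ε₀·I_d, let H be an ℝ^d-valued square-integrable random variable with E[H] = 0 and E[HHᵀ] = a·Δt, and let v : ℝ^d → ℝ be L-Lipschitz with v(x+H) integrable. Then for every x ∈ ℝ^d, |E[v(x+H)·a^{−1}H]| ≤ (L/ε₀)·Tr(a)·Δt. In particular, (Δt)^{−1}·|E[v(x+H)·a^{−1}H]| ≤ L·d·‖a‖/ε₀. -/

import Mathlib

/-!
Since `E[H] = 0`, the integrand `v(x + H) • a⁻¹H` may be replaced by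
`(v(x + H) - v(x)) • a⁻¹H`, whose norm is at most `L‖H‖ · ε₀⁻¹‖H‖`: the lower bound `a ≽ ε₀ I`
gives `‖a⁻¹‖ ≤ ε₀⁻¹`. Integrating, `E‖H‖² = Tr(E[HHᵀ]) = Tr(a) Δt`, and `Tr(a) ≤ d · na`.
-/

open MeasureTheory ProbabilityTheory Matrix Real

noncomputable section

abbrev Vec (d : ℕ) : Type := EuclideanSpace ℝ (Fin d)
abbrev Mat (d : ℕ) : Type := Matrix (Fin d) (Fin d) ℝ

/-- Matrix-vector product, valued in Euclidean space. -/
def matVec {d : ℕ} (a : Mat d) (v : Vec d) : Vec d := WithLp.toLp 2 (fun i => ∑ j, a i j * v j)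

lemma coe_toEuclideanCLM_eq_matVec {d : ℕ} (a : Mat d) :
    ⇑(toEuclideanCLM (𝕜 := ℝ) a) = matVec a := by
  ext y i
  simp [matVec, Matrix.mulVec, dotProduct]

namespace Matrix

variable {n : Type*} [DecidableEq n]

theorem PosSemidef.posDef_of_sub_smul_one {a : Matrix n n ℝ} {ε : ℝ} (hε : 0 < ε)
    (ha : (a - ε • 1).PosSemidef) : a.PosDef := by
  have hε1 : (ε • 1 : Matrix n n ℝ).PosDef := by
    rw [smul_one_eq_diagonal]
    exact posDef_diagonal_iff.mpr fun _ => hε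
  simpa using hε1.add_posSemidef ha

variable [Fintype n]

theorem trace_le_card_mul_of_dotProduct_mulVec_le {R : Type*} [CommRing R] [PartialOrder R]
    [IsOrderedRing R] {a : Matrix n n R} {c : R} (h : ∀ x : n → R, x ⬝ᵥ a *ᵥ x ≤ c * (x ⬝ᵥ x)) :
    a.trace ≤ Fintype.card n * c := by
  calc a.trace = ∑ i, a i i := rfl
    _ ≤ ∑ _i : n, c := Finset.sum_le_sum fun i _ => by
        simpa [mulVec_single, dotProduct_single] using h (Pi.single i 1)
    _ = Fintype.card n * c := by simp

variable {a : Matrix n n ℝ} {ε : ℝ}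

theorem PosSemidef.smul_norm_sq_le_inner_toEuclideanCLM (ha : (a - ε • 1).PosSemidef)
    (z : EuclideanSpace ℝ n) : ε * ‖z‖ ^ 2 ≤ inner ℝ z (toEuclideanCLM (𝕜 := ℝ) a z) := by
  have h := ha.dotProduct_mulVec_nonneg z.ofLp
  simp only [star_trivial, sub_mulVec, smul_mulVec, one_mulVec, dotProduct_sub,
    dotProduct_smul, smul_eq_mul, sub_nonneg] at h
  rwa [inner_toEuclideanCLM, ← real_inner_self_eq_norm_sq, EuclideanSpace.inner_eq_star_dotProduct,
    star_trivial]

theorem PosSemidef.smul_norm_le_norm_toEuclideanCLM (ha : (a - ε • 1).PosSemidef)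
    (z : EuclideanSpace ℝ n) : ε * ‖z‖ ≤ ‖toEuclideanCLM (𝕜 := ℝ) a z‖ := by
  rcases (norm_nonneg z).eq_or_lt with hz | hz
  · rw [← hz, mul_zero]; exact norm_nonneg _
  refine le_of_mul_le_mul_right ?_ hz
  calc ε * ‖z‖ * ‖z‖ = ε * ‖z‖ ^ 2 := by ring
    _ ≤ inner ℝ z (toEuclideanCLM (𝕜 := ℝ) a z) := ha.smul_norm_sq_le_inner_toEuclideanCLM z
    _ ≤ ‖z‖ * ‖toEuclideanCLM (𝕜 := ℝ) a z‖ := real_inner_le_norm _ _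
    _ = ‖toEuclideanCLM (𝕜 := ℝ) a z‖ * ‖z‖ := mul_comm _ _

theorem PosSemidef.norm_toEuclideanCLM_inv_le (hε : 0 < ε) (ha : (a - ε • 1).PosSemidef) :
    ‖toEuclideanCLM (𝕜 := ℝ) a⁻¹‖ ≤ ε⁻¹ := by
  refine ContinuousLinearMap.opNorm_le_bound _ (inv_nonneg.mpr hε.le) fun y => ?_
  have hy : toEuclideanCLM (𝕜 := ℝ) a (toEuclideanCLM (𝕜 := ℝ) a⁻¹ y) = y := by
    rw [← mul_apply_eq_comp, ← map_mul,
      mul_nonsing_inv _ (ha.posDef_of_sub_smul_one hε).det_pos.ne'.isUnit, map_one]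
    rfl
  rw [inv_mul_eq_div, le_div_iff₀' hε]
  simpa [hy] using ha.smul_norm_le_norm_toEuclideanCLM (toEuclideanCLM (𝕜 := ℝ) a⁻¹ y)

end Matrix

section

variable {Ω E F : Type*} [MeasurableSpace Ω] {μ : Measure Ω}
  [NormedAddCommGroup E] [NormedSpace ℝ E] [NormedAddCommGroup F] [NormedSpace ℝ F]

theorem integral_smul_eq_integral_sub_smul {f : Ω → ℝ} {G : Ω → F} (c : ℝ)
    (hG : Integrable G μ) (hG0 : ∫ ω, G ω ∂μ = 0)
    (hfG : Integrable (fun ω => (f ω - c) • G ω) μ) :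
    ∫ ω, f ω • G ω ∂μ = ∫ ω, (f ω - c) • G ω ∂μ := by
  have hsplit : (fun ω => f ω • G ω) = fun ω => (f ω - c) • G ω + c • G ω := by
    ext ω; rw [← add_smul, sub_add_cancel]
  have hcG : Integrable (fun ω => c • G ω) μ := hG.smul c
  rw [hsplit, integral_add hfG hcG, integral_smul, hG0, smul_zero, add_zero]

theorem norm_integral_lipschitzWith_smul_le [IsFiniteMeasure μ] [CompleteSpace E] [CompleteSpace F]
    {H : Ω → E} (hH : MemLp H 2 μ) (hmean : ∫ ω, H ω ∂μ = 0) {v : E → ℝ} {K : NNReal}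
    (hv : LipschitzWith K v) (A : E →L[ℝ] F) (x : E) :
    ‖∫ ω, v (x + H ω) • A (H ω) ∂μ‖ ≤ K * ‖A‖ * ∫ ω, ‖H ω‖ ^ 2 ∂μ := by
  have hAH : Integrable (fun ω => A (H ω)) μ := A.integrable_comp (hH.integrable one_le_two)
  have hAH0 : ∫ ω, A (H ω) ∂μ = 0 := by
    rw [A.integral_comp_comm (hH.integrable one_le_two), hmean, map_zero]
  have hbound : ∀ ω, ‖(v (x + H ω) - v x) • A (H ω)‖ ≤ K * ‖A‖ * ‖H ω‖ ^ 2 := fun ω => by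
    have hvH : |v (x + H ω) - v x| ≤ K * ‖H ω‖ := by
      simpa [Real.dist_eq] using hv.dist_le_mul (x + H ω) x
    calc ‖(v (x + H ω) - v x) • A (H ω)‖ = |v (x + H ω) - v x| * ‖A (H ω)‖ := by
          rw [norm_smul, Real.norm_eq_abs]
      _ ≤ (K * ‖H ω‖) * (‖A‖ * ‖H ω‖) :=
          mul_le_mul hvH (A.le_opNorm _) (norm_nonneg _) (by positivity)
      _ = K * ‖A‖ * ‖H ω‖ ^ 2 := by ring
  have hsq : Integrable (fun ω => K * ‖A‖ * ‖H ω‖ ^ 2) μ :=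
    (hH.integrable_norm_pow two_ne_zero).const_mul _
  have hmeas : AEStronglyMeasurable (fun ω => (v (x + H ω) - v x) • A (H ω)) μ :=
    ((hv.continuous.comp_aestronglyMeasurable (hH.1.const_add x)).sub
      aestronglyMeasurable_const).smul (A.continuous.comp_aestronglyMeasurable hH.1)
  rw [integral_smul_eq_integral_sub_smul (v x) hAH hAH0 (hsq.mono' hmeas (.of_forall hbound)),
    ← integral_const_mul]
  exact norm_integral_le_of_norm_le hsq (.of_forall hbound)

theorem EuclideanSpace.integral_norm_sq {ι : Type*} [Fintype ι] {H : Ω → EuclideanSpace ℝ ι}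
    (hH : MemLp H 2 μ) : ∫ ω, ‖H ω‖ ^ 2 ∂μ = ∑ i, ∫ ω, H ω i ^ 2 ∂μ := by
  simp_rw [EuclideanSpace.norm_sq_eq, Real.norm_eq_abs, sq_abs]
  exact integral_finsetSum _ fun i _ =>
    ((EuclideanSpace.proj (𝕜 := ℝ) i).comp_memLp' hH).integrable_sq

end

theorem discrete_gradient_bound_general
    (d : ℕ) (ε₀ Δt L na : ℝ) (hε₀ : 0 < ε₀) (hΔt : 0 < Δt)
    (hL : 0 ≤ L)
    (a : Mat d) (ha_lb : (a - ε₀ • (1 : Mat d)).PosSemidef)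
    (hna_ub : ∀ x : Fin d → ℝ, x ⬝ᵥ a.mulVec x ≤ na * (x ⬝ᵥ x))
    (Ω : Type) [MeasurableSpace Ω] (P : Measure Ω) [IsProbabilityMeasure P]
    (H : Ω → Vec d) (hH2 : MemLp H 2 P)
    (hmean : (∫ ω, H ω ∂P) = 0)
    (hcov : ∀ i j : Fin d, (∫ ω, H ω i * H ω j ∂P) = a i j * Δt)
    (v : Vec d → ℝ) (hv : ∀ x y : Vec d, |v x - v y| ≤ L * ‖x - y‖)
    (x : Vec d) :
    ‖∫ ω, v (x + H ω) • matVec a⁻¹ (H ω) ∂P‖ ≤ (L / ε₀) * a.trace * Δt ∧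
    Δt⁻¹ * ‖∫ ω, v (x + H ω) • matVec a⁻¹ (H ω) ∂P‖ ≤ L * d * na / ε₀ := by
  have hlip : LipschitzWith L.toNNReal v :=
    .of_dist_le' fun y z => by simpa [Real.dist_eq, dist_eq_norm] using hv y z
  have hsecond : ∫ ω, ‖H ω‖ ^ 2 ∂P = a.trace * Δt := by
    rw [EuclideanSpace.integral_norm_sq hH2, trace, Finset.sum_mul]
    simp only [sq, hcov, diag]
  have hmain : ‖∫ ω, v (x + H ω) • matVec a⁻¹ (H ω) ∂P‖ ≤ (L / ε₀) * a.trace * Δt := by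
    rw [← coe_toEuclideanCLM_eq_matVec]
    calc _ ≤ L * ‖toEuclideanCLM (𝕜 := ℝ) a⁻¹‖ * ∫ ω, ‖H ω‖ ^ 2 ∂P := by
          simpa [Real.coe_toNNReal _ hL] using
            norm_integral_lipschitzWith_smul_le hH2 hmean hlip (toEuclideanCLM (𝕜 := ℝ) a⁻¹) x
      _ ≤ L * ε₀⁻¹ * ∫ ω, ‖H ω‖ ^ 2 ∂P := by
          gcongr
          exact ha_lb.norm_toEuclideanCLM_inv_le hε₀
      _ = (L / ε₀) * a.trace * Δt := by rw [hsecond]; ring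
  refine ⟨hmain, ?_⟩
  calc Δt⁻¹ * ‖∫ ω, v (x + H ω) • matVec a⁻¹ (H ω) ∂P‖
      ≤ Δt⁻¹ * ((L / ε₀) * a.trace * Δt) := by gcongr
    _ = (L / ε₀) * a.trace := by field_simp
    _ ≤ (L / ε₀) * (d * na) := by
        gcongr
        simpa using trace_le_card_mul_of_dotProduct_mulVec_le hna_ub
    _ = L * d * na / ε₀ := by ring

/-- **Uniform bound for the discrete gradient approximation.**
Let `ε₀ > 0`, `Δt > 0`, `a ≽ ε₀·I_d` symmetric, and let `H` be a centered,
square-integrable `ℝ^d`-valued random variable with `E[HHᵀ] = a·Δt`.  If `v` is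
`L`-Lipschitz and `v(x+H)` is integrable then
`|E[v(x+H)·a⁻¹H]| ≤ (L/ε₀)·Tr(a)·Δt`, and in particular
`Δt⁻¹·|E[v(x+H)·a⁻¹H]| ≤ L·d·‖a‖/ε₀` (here `na` is any bound on the operator
quadratic form of `a`, as is the case for `na = ‖a‖`). -/
theorem discrete_gradient_bound
    (d : ℕ) (hd : 1 ≤ d) (ε₀ Δt L na : ℝ) (hε₀ : 0 < ε₀) (hΔt : 0 < Δt)
    (hL : 0 ≤ L) (hna : 0 ≤ na)
    (a : Mat d) (ha_lb : (a - ε₀ • (1 : Mat d)).PosSemidef)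
    (hna_ub : ∀ x : Fin d → ℝ, x ⬝ᵥ a.mulVec x ≤ na * (x ⬝ᵥ x))
    (Ω : Type) [MeasurableSpace Ω] (P : Measure Ω) [IsProbabilityMeasure P]
    (H : Ω → Vec d) (hHmeas : Measurable H) (hH2 : MemLp H 2 P)
    (hmean : (∫ ω, H ω ∂P) = 0)
    (hcov : ∀ i j : Fin d, (∫ ω, H ω i * H ω j ∂P) = a i j * Δt)
    (v : Vec d → ℝ) (hv : ∀ x y : Vec d, |v x - v y| ≤ L * ‖x - y‖)
    (x : Vec d) (hint : Integrable (fun ω => v (x + H ω)) P) :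
    ‖∫ ω, v (x + H ω) • matVec a⁻¹ (H ω) ∂P‖ ≤ (L / ε₀) * a.trace * Δt ∧
    Δt⁻¹ * ‖∫ ω, v (x + H ω) • matVec a⁻¹ (H ω) ∂P‖ ≤ L * d * na / ε₀ :=
  discrete_gradient_bound_general d ε₀ Δt L na hε₀ hΔt hL a ha_lb hna_ub Ω P H hH2 hmean hcov v hv x
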